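/- Assume q ≠ 1. Let (τ_{n+1})_{n≥0} be a Jones–Markov trace on the tower (TL_n(q))_{n≥0}, and define ρ_1 := τ_1 and ρ_{n+1} := τ_{n+1} ∘ E_n for n ≥ 1. Then (ρ_n)_{n≥1} is an affine Markov trace on the tower (TLhat_n(q))_{n≥1}. -/

import Mathlib

namespace AffineTL

open FreeAlgebra

/-- Cyclic successor on `Fin m`. -/
def csucc {m : ℕ} (i : Fin m) : Fin m := ⟨(i.val + 1) % m, Nat.mod_lt _ i.pos⟩

/-- The defining relations of the affine Temperley–Lieb algebra `TLhat_m(q)` with `m`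
generators (indexed so that `g_{σ_i}` has index `i - 1` and `g_{a_m}` has index `m - 1`).
For `m = 1` the unique generator is set to `0`, so that `TLhat_1(q) ≅ K`. -/
inductive ATLRel {K : Type*} [CommRing K] (q : K) (m : ℕ) :
    FreeAlgebra K (Fin m) → FreeAlgebra K (Fin m) → Prop
  | degen (h : m ≤ 1) (i : Fin m) : ATLRel q m (ι K i) 0
  | quad (h : 2 ≤ m) (i : Fin m) :
      ATLRel q m (ι K i * ι K i) ((q - 1) • ι K i + algebraMap K _ q)
  | comm (h : 3 ≤ m) (i j : Fin m) (h1 : i ≠ j) (h2 : j ≠ csucc i) (h3 : i ≠ csucc j) :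
      ATLRel q m (ι K i * ι K j) (ι K j * ι K i)
  | braid (h : 3 ≤ m) (i : Fin m) :
      ATLRel q m (ι K i * ι K (csucc i) * ι K i) (ι K (csucc i) * ι K i * ι K (csucc i))
  | vrel (h : 3 ≤ m) (i : Fin m) :
      ATLRel q m (ι K i * ι K (csucc i) * ι K i + ι K i * ι K (csucc i) + ι K (csucc i) * ι K i
        + ι K i + ι K (csucc i) + 1) 0

/-- The affine Temperley–Lieb algebra `TLhat_m(q)` of type `Ã`. -/
abbrev ATL (K : Type*) [CommRing K] (q : K) (m : ℕ) : Type _ := RingQuot (ATLRel q m)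

/-- The generators of `TLhat_m(q)`. -/
noncomputable def g {K : Type*} [CommRing K] (q : K) (m : ℕ) (i : Fin m) : ATL K q m :=
  RingQuot.mkAlgHom K (ATLRel q m) (ι K i)

/-- The defining relations of the type `A` Temperley–Lieb algebra `TL_n(q)` with `n`
generators (`g_{σ_i}` has index `i - 1`). -/
inductive TLARel {K : Type*} [CommRing K] (q : K) (n : ℕ) :
    FreeAlgebra K (Fin n) → FreeAlgebra K (Fin n) → Prop
  | quad (i : Fin n) :
      TLARel q n (ι K i * ι K i) ((q - 1) • ι K i + algebraMap K _ q)
  | comm (i j : Fin n) (h : i.val + 2 ≤ j.val ∨ j.val + 2 ≤ i.val) :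
      TLARel q n (ι K i * ι K j) (ι K j * ι K i)
  | braid (i j : Fin n) (h : j.val = i.val + 1) :
      TLARel q n (ι K i * ι K j * ι K i) (ι K j * ι K i * ι K j)
  | vrel (i j : Fin n) (h : j.val = i.val + 1) :
      TLARel q n (ι K i * ι K j * ι K i + ι K i * ι K j + ι K j * ι K i
        + ι K i + ι K j + 1) 0

/-- The type `A` Temperley–Lieb algebra `TL_n(q)`. -/
abbrev TLA (K : Type*) [CommRing K] (q : K) (n : ℕ) : Type _ := RingQuot (TLARel q n)

/-- The generators of `TL_n(q)`. -/
noncomputable def gA {K : Type*} [CommRing K] (q : K) (n : ℕ) (i : Fin n) : TLA K q n :=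
  RingQuot.mkAlgHom K (TLARel q n) (ι K i)

/-- The formal inverse `q⁻¹·(x − (q−1))` of an element satisfying `x² = (q−1)x + q`. -/
noncomputable def qinv {K : Type*} [CommRing K] (q : K) {A : Type*} [Ring A] [Algebra K A]
    (x : A) : A :=
  Ring.inverse q • (x - algebraMap K A (q - 1))

/-- A trace on a `K`-algebra: a `K`-linear form vanishing on commutators. -/
def IsTrace {K : Type*} [CommRing K] {A : Type*} [Ring A] [Algebra K A]
    (τ : A →ₗ[K] K) : Prop :=
  ∀ x y : A, τ (x * y) = τ (y * x)

/-- The element `G = g_{σ_n}⋯g_{σ_1}·g_{a_{n+1}}` of `TLhat_{n+1}(q)`. -/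
noncomputable def bigG {K : Type*} [CommRing K] (q : K) (n : ℕ) : ATL K q (n + 1) :=
  (List.ofFn fun j : Fin n => g q (n + 1) ⟨n - 1 - j.val, by omega⟩).prod *
    g q (n + 1) (Fin.last n)

/-- The inverse `G⁻¹ = g_{a_{n+1}}⁻¹·g_{σ_1}⁻¹⋯g_{σ_n}⁻¹` of `bigG`. -/
noncomputable def bigGinv {K : Type*} [CommRing K] (q : K) (n : ℕ) : ATL K q (n + 1) :=
  qinv q (g q (n + 1) (Fin.last n)) *
    (List.ofFn fun j : Fin n => qinv q (g q (n + 1) j.castSucc)).prod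

end AffineTL

namespace AffineTL

/-- `F` is the canonical homomorphism `F_m : TLhat_m(q) → TLhat_{m+1}(q)`:
`t_{σ_i} ↦ g_{σ_i}` for `1 ≤ i ≤ m−1` and `t_{a_m} ↦ g_{σ_m}·g_{a_{m+1}}·g_{σ_m}⁻¹`. -/
def isF {K : Type*} [CommRing K] (q : K) (m : ℕ) (hm : 2 ≤ m)
    (F : ATL K q m →ₐ[K] ATL K q (m + 1)) : Prop :=
  (∀ i : ℕ, ∀ hi : i < m - 1,
      F (g q m ⟨i, by omega⟩) = g q (m + 1) ⟨i, by omega⟩) ∧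
  F (g q m ⟨m - 1, by omega⟩) =
    g q (m + 1) ⟨m - 1, by omega⟩ * g q (m + 1) ⟨m, by omega⟩ *
      qinv q (g q (m + 1) ⟨m - 1, by omega⟩)

end AffineTL

namespace AffineTL

/-- `E` is the canonical surjection `E_n : TLhat_{n+1}(q) → TL_n(q)`:
`g_{σ_i} ↦ g_{σ_i}` for `1 ≤ i ≤ n` and
`g_{a_{n+1}} ↦ g_{σ_1}⋯g_{σ_{n−1}}·g_{σ_n}·g_{σ_{n−1}}⁻¹⋯g_{σ_1}⁻¹`. -/
def isE {K : Type*} [CommRing K] (q : K) (n : ℕ) (hn : 1 ≤ n)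
    (E : ATL K q (n + 1) →ₐ[K] TLA K q n) : Prop :=
  (∀ i : Fin n, E (g q (n + 1) i.castSucc) = gA q n i) ∧
  E (g q (n + 1) (Fin.last n)) =
    (List.ofFn fun j : Fin (n - 1) => gA q n ⟨j.val, by omega⟩).prod *
      gA q n ⟨n - 1, by omega⟩ *
      (List.ofFn fun j : Fin (n - 1) => qinv q (gA q n ⟨n - 2 - j.val, by omega⟩)).prod

end AffineTL

namespace AffineTL

/-- The conditions defining an affine Markov trace on the tower `(TLhat_n(q))_{n ≥ 1}`.
Here `σ m` stands for the component `τ̂_{m+1}` defined on `TLhat_{m+1}(q)`, and `F m` is the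
homomorphism `F_m : TLhat_m(q) → TLhat_{m+1}(q)`: each component is a trace, the first
component is normalized, and the Markov conditions
`τ̂_{n+1}(F_n(h)·T_{σ_n}^{±1}) = τ̂_n(h)` hold for all `n ≥ 1`. -/
def IsAffineMarkovTrace {K : Type*} [CommRing K] (q sq : K)
    (F : ∀ m : ℕ, ATL K q m →ₐ[K] ATL K q (m + 1))
    (σ : ∀ m : ℕ, ATL K q (m + 1) →ₗ[K] K) : Prop :=
  (∀ m, IsTrace (σ m)) ∧
  σ 0 1 = 1 ∧
  (∀ m : ℕ, ∀ h : ATL K q (m + 1),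
    σ (m + 1) (F (m + 1) h * (sq • g q (m + 2) ⟨m, by omega⟩)) = σ m h) ∧
  (∀ m : ℕ, ∀ h : ATL K q (m + 1),
    σ (m + 1) (F (m + 1) h *
      (Ring.inverse sq • qinv q (g q (m + 2) ⟨m, by omega⟩))) = σ m h)

/-- Invariance of a family of traces under the Dynkin automorphisms `ψ_n`. -/
def IsDynkinInvariant {K : Type*} [CommRing K] {q : K}
    (ψ : ∀ m : ℕ, ATL K q m ≃ₐ[K] ATL K q m)
    (σ : ∀ m : ℕ, ATL K q (m + 1) →ₗ[K] K) : Prop :=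
  ∀ m : ℕ, ∀ x : ATL K q (m + 1), σ m (ψ (m + 1) x) = σ m x

end AffineTL

/-!
The maps `E` intertwine the inclusions: `E_{n+1} ∘ F_{n+1} = ι_{n+1} ∘ E_n`, so the affine
Markov conditions for `τ ∘ E` are the type `A` ones. For the Dynkin invariance, let `s_i` be
the (invertible) generators of `TL_n(q)` and `W = s_1 ⋯ s_n`. The image of `g_{a_{n+1}}` is
`W' s_n W'⁻¹` with `W' = s_1 ⋯ s_{n-1}`, and the braid relations alone show that conjugation
by `W` permutes the images of the generators cyclically, i.e. `E_n ∘ ψ_{n+1} = Ad W ∘ E_n`;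
a trace is invariant under `Ad W`.
-/

namespace AffineTL

section BraidWords

variable {G : Type*} [Group G] (s : ℕ → G)

def braidWord (k : ℕ) : G := (List.ofFn fun j : Fin k => s j).prod

/-- For the generators `s` of `TL_{k+1}(q)` this is `E_{k+1}(g_{a_{k+2}})`. -/
def affineGen (k : ℕ) : G := braidWord s k * s k * (braidWord s k)⁻¹

structure BraidRels (n : ℕ) : Prop where
  commute : ∀ i j, i + 2 ≤ j → j < n → Commute (s i) (s j)
  braid : ∀ i, i + 1 < n → s i * s (i + 1) * s i = s (i + 1) * s i * s (i + 1)

variable {s}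

theorem braidWord_zero : braidWord s 0 = 1 := rfl

theorem braidWord_succ (k : ℕ) : braidWord s (k + 1) = braidWord s k * s k := by
  rw [braidWord, List.ofFn_succ', List.prod_concat]
  rfl

theorem map_braidWord {H : Type*} [Group H] {t : ℕ → H} (f : G →* H) {k : ℕ}
    (h : ∀ i < k, f (s i) = t i) : f (braidWord s k) = braidWord t k := by
  induction k with
  | zero => exact map_one f
  | succ k ih =>
    rw [braidWord_succ, braidWord_succ, map_mul, ih fun i hi => h i (by omega), h k k.lt_succ_self]

theorem map_affineGen {H : Type*} [Group H] {t : ℕ → H} (f : G →* H) {k : ℕ}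
    (h : ∀ i ≤ k, f (s i) = t i) : f (affineGen s k) = affineGen t k := by
  rw [affineGen, affineGen, map_mul, map_mul, map_inv, map_braidWord f fun i hi => h i hi.le,
    h k le_rfl]

theorem braidWord_succ_conj_self (k : ℕ) :
    braidWord s (k + 1) * s k * (braidWord s (k + 1))⁻¹ = affineGen s k := by
  rw [affineGen, braidWord_succ]
  group

namespace BraidRels

variable {n : ℕ}

theorem commute_braidWord (hs : BraidRels s n) {a k : ℕ} (ha : a < n) (hk : k + 1 ≤ a) :
    Commute (s a) (braidWord s k) := by
  induction k with
  | zero => exact Commute.one_right _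
  | succ k ih =>
    rw [braidWord_succ]
    exact (ih (by omega)).mul_right (hs.commute k a (by omega) ha).symm

theorem braidWord_mul_of_add_two_le (hs : BraidRels s n) {i k : ℕ} (hk : k ≤ n)
    (hi : i + 2 ≤ k) :
    braidWord s k * s i = s (i + 1) * braidWord s k := by
  induction k, hi using Nat.le_induction with
  | base =>
    have hc := (hs.commute_braidWord (a := i + 1) (k := i) (by omega) le_rfl).eq
    calc braidWord s (i + 2) * s i = braidWord s i * (s i * s (i + 1) * s i) := by
          simp only [braidWord_succ, mul_assoc]
      _ = braidWord s i * s (i + 1) * (s i * s (i + 1)) := by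
          rw [hs.braid i (by omega)]; simp only [mul_assoc]
      _ = s (i + 1) * braidWord s (i + 2) := by
          rw [← hc]; simp only [braidWord_succ, mul_assoc]
  | succ k hik ih =>
    have hc := (hs.commute i k hik (by omega)).eq
    rw [braidWord_succ, mul_assoc, ← hc, ← mul_assoc, ih (by omega), mul_assoc]

theorem braidWord_conj_of_add_two_le (hs : BraidRels s n) {i k : ℕ} (hk : k ≤ n)
    (hi : i + 2 ≤ k) :
    braidWord s k * s i * (braidWord s k)⁻¹ = s (i + 1) := by
  rw [hs.braidWord_mul_of_add_two_le hk hi, mul_inv_cancel_right]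

theorem braidWord_succ_mul_braidWord_mul (hs : BraidRels s n) {k : ℕ} (hk : k + 1 ≤ n) :
    braidWord s (k + 1) * braidWord s k * s k = s 0 * (braidWord s (k + 1) * braidWord s k) := by
  induction k with
  | zero => simp only [braidWord_succ, braidWord_zero, one_mul, mul_one]
  | succ k ih =>
    have hc := (hs.commute_braidWord (a := k + 1) (k := k) (by omega) le_rfl).eq
    calc braidWord s (k + 2) * braidWord s (k + 1) * s (k + 1)
        = braidWord s (k + 1) * (s (k + 1) * braidWord s k) * (s k * s (k + 1)) := by
          simp only [braidWord_succ, mul_assoc]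
      _ = braidWord s (k + 1) * braidWord s k * (s (k + 1) * s k * s (k + 1)) := by
          rw [hc]; simp only [mul_assoc]
      _ = braidWord s (k + 1) * braidWord s k * s k * (s (k + 1) * s k) := by
          rw [← hs.braid k (by omega)]; simp only [mul_assoc]
      _ = s 0 * (braidWord s (k + 1) * (braidWord s k * s (k + 1)) * s k) := by
          rw [ih (by omega)]; simp only [mul_assoc]
      _ = s 0 * (braidWord s (k + 2) * braidWord s (k + 1)) := by
          rw [← hc]; simp only [braidWord_succ, mul_assoc]

theorem braidWord_conj_affineGen (hs : BraidRels s n) {k : ℕ} (hk : k + 1 ≤ n) :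
    braidWord s (k + 1) * affineGen s k * (braidWord s (k + 1))⁻¹ = s 0 := by
  have h := hs.braidWord_succ_mul_braidWord_mul hk
  rw [← mul_inv_eq_iff_eq_mul] at h
  rw [← h, affineGen]
  group

theorem conj_affineGen_succ (hs : BraidRels s n) {k : ℕ} (hk : k + 1 < n) :
    s (k + 1) * affineGen s (k + 1) * (s (k + 1))⁻¹ = affineGen s k := by
  have hc := (hs.commute_braidWord (a := k + 1) (k := k) hk le_rfl).eq
  have hb : s (k + 1) * (s k * s (k + 1) * (s k)⁻¹) * (s (k + 1))⁻¹ = s k := by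
    calc _ = s (k + 1) * s k * s (k + 1) * (s k)⁻¹ * (s (k + 1))⁻¹ := by group
      _ = s k := by rw [← hs.braid k hk]; group
  calc s (k + 1) * affineGen s (k + 1) * (s (k + 1))⁻¹
      = (s (k + 1) * braidWord s k) * (s k * s (k + 1) * (s k)⁻¹)
          * (s (k + 1) * braidWord s k)⁻¹ := by
        rw [affineGen, braidWord_succ]; group
    _ = braidWord s k * (s (k + 1) * (s k * s (k + 1) * (s k)⁻¹) * (s (k + 1))⁻¹)
          * (braidWord s k)⁻¹ := by
        rw [hc]; group
    _ = affineGen s k := by rw [hb, affineGen]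

end BraidRels

end BraidWords

section Quadratic

variable {K : Type*} [CommRing K] {q : K} {A B : Type*} [Ring A] [Algebra K A] [Ring B]
  [Algebra K B]

theorem qinv_mul_self (hq : IsUnit q) {x : A} (hx : x * x = (q - 1) • x + algebraMap K A q) :
    qinv q x * x = 1 := by
  rw [qinv, smul_mul_assoc, sub_mul, hx, ← Algebra.smul_def, add_sub_cancel_left,
    Algebra.smul_def, ← map_mul, Ring.inverse_mul_cancel _ hq, map_one]

theorem mul_qinv_self (hq : IsUnit q) {x : A} (hx : x * x = (q - 1) • x + algebraMap K A q) :
    x * qinv q x = 1 := by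
  rw [qinv, mul_smul_comm, mul_sub, hx, ← Algebra.commutes, ← Algebra.smul_def,
    add_sub_cancel_left, Algebra.smul_def, ← map_mul, Ring.inverse_mul_cancel _ hq, map_one]

theorem map_qinv (f : A →ₐ[K] B) (x : A) : f (qinv q x) = qinv q (f x) := by
  rw [qinv, qinv, map_smul, map_sub, AlgHom.commutes]

noncomputable def unitOfHecke (hq : IsUnit q) {x : A}
    (hx : x * x = (q - 1) • x + algebraMap K A q) : Aˣ :=
  ⟨x, qinv q x, mul_qinv_self hq hx, qinv_mul_self hq hx⟩

end Quadratic

theorem IsTrace.comp {K : Type*} [CommRing K] {A B : Type*} [Ring A] [Algebra K A] [Ring B]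
    [Algebra K B] {τ : B →ₗ[K] K} (hτ : IsTrace τ) (f : A →ₐ[K] B) :
    IsTrace (τ.comp f.toLinearMap) := fun x y => by
  simpa only [LinearMap.comp_apply, AlgHom.toLinearMap_apply, map_mul] using hτ (f x) (f y)

theorem IsTrace.apply_units_conj {K : Type*} [CommRing K] {A : Type*} [Ring A] [Algebra K A]
    {τ : A →ₗ[K] K} (hτ : IsTrace τ) (u : Aˣ) (x : A) : τ (u * x * ↑u⁻¹) = τ x := by
  rw [hτ, ← mul_assoc, Units.inv_mul, one_mul]

variable {K : Type*} [CommRing K] {q : K}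

section TypeA

variable {n : ℕ}

theorem gA_mul_self (i : Fin n) :
    gA q n i * gA q n i = (q - 1) • gA q n i + algebraMap K (TLA K q n) q := by
  have := RingQuot.mkAlgHom_rel K (TLARel.quad (q := q) i)
  rwa [map_mul, map_add, map_smul, AlgHom.commutes] at this

theorem commute_gA {i j : Fin n} (h : i.val + 2 ≤ j.val) : Commute (gA q n i) (gA q n j) := by
  have := RingQuot.mkAlgHom_rel K (TLARel.comm (q := q) i j (Or.inl h))
  rwa [map_mul, map_mul] at this

theorem gA_braid {i j : Fin n} (h : j.val = i.val + 1) :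
    gA q n i * gA q n j * gA q n i = gA q n j * gA q n i * gA q n j := by
  have := RingQuot.mkAlgHom_rel K (TLARel.braid (q := q) i j h)
  simp only [map_mul] at this
  exact this

/-- The generators of `TL_n(q)` as units, indexed by `ℕ`; the value for `i ≥ n` is `1`. -/
noncomputable def gAUnit (hq : IsUnit q) (n i : ℕ) : (TLA K q n)ˣ :=
  if h : i < n then unitOfHecke hq (gA_mul_self ⟨i, h⟩) else 1

variable (hq : IsUnit q)

theorem coe_gAUnit_of_lt {i : ℕ} (h : i < n) :
    (gAUnit hq n i : TLA K q n) = gA q n ⟨i, h⟩ := by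
  rw [gAUnit, dif_pos h]
  rfl

theorem coe_gAUnit (i : Fin n) : (gAUnit hq n i : TLA K q n) = gA q n i :=
  coe_gAUnit_of_lt hq i.isLt

theorem coe_gAUnit_inv (i : Fin n) : (↑(gAUnit hq n i)⁻¹ : TLA K q n) = qinv q (gA q n i) := by
  rw [gAUnit, dif_pos i.isLt]
  rfl

theorem braidRels_gAUnit : BraidRels (gAUnit hq n) n where
  commute i j hij hj := by
    rw [Commute, SemiconjBy, Units.ext_iff, Units.val_mul, Units.val_mul,
      coe_gAUnit_of_lt hq hj, coe_gAUnit_of_lt hq (by omega)]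
    exact commute_gA (q := q) (i := ⟨i, by omega⟩) (j := ⟨j, hj⟩) hij
  braid i hi := by
    rw [Units.ext_iff, Units.val_mul, Units.val_mul, Units.val_mul, Units.val_mul,
      coe_gAUnit_of_lt hq hi, coe_gAUnit_of_lt hq (by omega)]
    exact gA_braid (q := q) (i := ⟨i, by omega⟩) (j := ⟨i + 1, hi⟩) rfl

theorem coe_braidWord_gAUnit {k : ℕ} (hk : k ≤ n) :
    ((braidWord (gAUnit hq n) k : (TLA K q n)ˣ) : TLA K q n) =
      (List.ofFn fun j : Fin k => gA q n ⟨j, by omega⟩).prod := by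
  rw [braidWord, ← Units.coeHom_apply, map_list_prod, List.map_ofFn]
  congr 1
  exact List.ofFn_inj.mpr (funext fun j => coe_gAUnit hq ⟨j, by omega⟩)

theorem coe_braidWord_gAUnit_inv {k : ℕ} (hk : k ≤ n) :
    (↑(braidWord (gAUnit hq n) k)⁻¹ : TLA K q n) =
      (List.ofFn fun j : Fin k => qinv q (gA q n ⟨k - 1 - j, by omega⟩)).prod := by
  induction k with
  | zero => rfl
  | succ k ih =>
    rw [braidWord_succ, mul_inv_rev, Units.val_mul, ih (by omega), List.ofFn_succ,
      List.prod_cons, coe_gAUnit_inv hq ⟨k, hk⟩]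
    congr 2
    refine List.ofFn_inj.mpr (funext fun j => ?_)
    exact congrArg (qinv q ∘ gA q n) (Fin.ext (by simp only [Fin.val_succ]; omega))

end TypeA

theorem ATL.algHom_ext {m : ℕ} {B : Type*} [Semiring B] [Algebra K B]
    {f f' : ATL K q m →ₐ[K] B} (h : ∀ i, f (g q m i) = f' (g q m i)) : f = f' :=
  RingQuot.ringQuot_ext' _ _ _ (FreeAlgebra.hom_ext (funext h))

theorem g_one_eq_zero (i : Fin 1) : g q 1 i = 0 := by
  have := RingQuot.mkAlgHom_rel K (ATLRel.degen (q := q) le_rfl i)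
  rwa [map_zero] at this

theorem ATL.algHom_ext_one {B : Type*} [Semiring B] [Algebra K B]
    (f f' : ATL K q 1 →ₐ[K] B) : f = f' :=
  ATL.algHom_ext fun i => by rw [g_one_eq_zero, map_zero, map_zero]

theorem csucc_castSucc {m : ℕ} (i : Fin m) : csucc i.castSucc = i.succ :=
  Fin.ext (Nat.mod_eq_of_lt (by simp))

theorem csucc_last (m : ℕ) : csucc (Fin.last m) = 0 :=
  Fin.ext (Nat.mod_self _)

theorem map_gAUnit (hq : IsUnit q) {n : ℕ} {ι : TLA K q n →ₐ[K] TLA K q (n + 1)}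
    (hι : ∀ i : Fin n, ι (gA q n i) = gA q (n + 1) i.castSucc) {i : ℕ} (hi : i < n) :
    Units.map (ι : TLA K q n →* TLA K q (n + 1)) (gAUnit hq n i) = gAUnit hq (n + 1) i := by
  ext
  rw [Units.coe_map, coe_gAUnit_of_lt hq hi, coe_gAUnit_of_lt hq (by omega)]
  exact hι ⟨i, hi⟩

theorem isE.apply_g_last (hq : IsUnit q) {k : ℕ} {hk : 1 ≤ k + 1}
    {E : ATL K q (k + 2) →ₐ[K] TLA K q (k + 1)} (hE : isE q (k + 1) hk E) :
    E (g q (k + 2) (Fin.last (k + 1))) = affineGen (gAUnit hq (k + 1)) k := by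
  rw [hE.2, affineGen, Units.val_mul, Units.val_mul, coe_braidWord_gAUnit hq (by omega),
    coe_braidWord_gAUnit_inv hq (by omega), coe_gAUnit_of_lt hq (by omega)]
  rfl

theorem isE.apply_F_eq_inclusion (hq : IsUnit q) {k : ℕ} {h₁ : 2 ≤ k + 2} {h₂ : 1 ≤ k + 1}
    {h₃ : 1 ≤ k + 2} {F : ATL K q (k + 2) →ₐ[K] ATL K q (k + 3)}
    {E₁ : ATL K q (k + 2) →ₐ[K] TLA K q (k + 1)} {E₂ : ATL K q (k + 3) →ₐ[K] TLA K q (k + 2)}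
    {ι : TLA K q (k + 1) →ₐ[K] TLA K q (k + 2)}
    (hF : isF q (k + 2) h₁ F) (hE₁ : isE q (k + 1) h₂ E₁) (hE₂ : isE q (k + 2) h₃ E₂)
    (hι : ∀ i : Fin (k + 1), ι (gA q (k + 1) i) = gA q (k + 2) i.castSucc)
    (x : ATL K q (k + 2)) : E₂ (F x) = ι (E₁ x) := by
  suffices E₂.comp F = ι.comp E₁ from DFunLike.congr_fun this x
  refine ATL.algHom_ext fun i => ?_
  simp only [AlgHom.comp_apply]
  cases i using Fin.lastCases with
  | last =>
    have hFlast : F (g q (k + 2) (Fin.last (k + 1))) =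
        g q (k + 3) (Fin.last (k + 1)).castSucc * g q (k + 3) (Fin.last (k + 2)) *
          qinv q (g q (k + 3) (Fin.last (k + 1)).castSucc) := hF.2
    have hE₂last :
        E₂ (g q (k + 3) (Fin.last (k + 2))) = affineGen (gAUnit hq (k + 2)) (k + 1) :=
      hE₂.apply_g_last hq
    rw [hFlast, map_mul, map_mul, map_qinv, hE₂.1, hE₂last, hE₁.apply_g_last hq,
      ← coe_gAUnit_inv hq, ← coe_gAUnit hq, ← Units.val_mul, ← Units.val_mul, Fin.val_last,
      (braidRels_gAUnit hq).conj_affineGen_succ (by omega), ← MonoidHom.coe_coe ι,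
      ← Units.coe_map, map_affineGen _ fun i hi => map_gAUnit hq hι (by omega)]
  | cast i =>
    have hFi : F (g q (k + 2) i.castSucc) = g q (k + 3) i.castSucc.castSucc := hF.1 i i.isLt
    rw [hFi, hE₂.1, hE₁.1, hι]

theorem isE.apply_dynkin_eq_conj (hq : IsUnit q) {k : ℕ} {hk : 1 ≤ k + 1}
    {E : ATL K q (k + 2) →ₐ[K] TLA K q (k + 1)} (hE : isE q (k + 1) hk E)
    {ψ : ATL K q (k + 2) ≃ₐ[K] ATL K q (k + 2)}
    (hψ : ∀ i, ψ (g q (k + 2) i) = g q (k + 2) (csucc i)) (x : ATL K q (k + 2)) :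
    E (ψ x) = braidWord (gAUnit hq (k + 1)) (k + 1) * E x *
      ↑(braidWord (gAUnit hq (k + 1)) (k + 1))⁻¹ := by
  suffices E.comp ψ.toAlgHom = (MulSemiringAction.toAlgHom K _
      (ConjAct.toConjAct (braidWord (gAUnit hq (k + 1)) (k + 1)))).comp E by
    simpa [ConjAct.units_smul_def] using DFunLike.congr_fun this x
  have hs := braidRels_gAUnit hq (n := k + 1)
  refine ATL.algHom_ext fun i => ?_
  simp only [AlgHom.comp_apply, AlgEquiv.coe_toAlgHom, hψ, MulSemiringAction.toAlgHom_apply,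
    ConjAct.units_smul_def, ConjAct.ofConjAct_toConjAct]
  cases i using Fin.lastCases with
  | last =>
    rw [csucc_last, hE.apply_g_last hq, ← Fin.castSucc_zero, hE.1, ← coe_gAUnit hq,
      ← Units.val_mul, ← Units.val_mul, hs.braidWord_conj_affineGen le_rfl]
    rfl
  | cast j =>
    rw [csucc_castSucc, hE.1, ← coe_gAUnit hq, ← Units.val_mul, ← Units.val_mul]
    cases j using Fin.lastCases with
    | last => rw [Fin.succ_last, hE.apply_g_last hq, Fin.val_last, braidWord_succ_conj_self]
    | cast j =>
      rw [Fin.succ_castSucc, hE.1, ← coe_gAUnit hq, Fin.val_castSucc,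
        hs.braidWord_conj_of_add_two_le le_rfl (by omega)]
      rfl

end AffineTL

open AffineTL in
theorem statement14_general {K : Type*} [CommRing K]
    (q sq : K) (hq : IsUnit q)
    (F : ∀ m : ℕ, ATL K q m →ₐ[K] ATL K q (m + 1))
    (hF : ∀ m : ℕ, ∀ hm : 2 ≤ m, isF q m hm (F m))
    (E : ∀ m : ℕ, ATL K q (m + 1) →ₐ[K] TLA K q m)
    (hE : ∀ m : ℕ, ∀ hm : 1 ≤ m, isE q m hm (E m))
    (ψ : ∀ m : ℕ, ATL K q m ≃ₐ[K] ATL K q m)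
    (hψ : ∀ m : ℕ, ∀ i : Fin m, (ψ m) (g q m i) = g q m (csucc i))
    (τ : ∀ m : ℕ, TLA K q m →ₗ[K] K)
    (htr : ∀ m, IsTrace (τ m)) (hτ1 : τ 0 1 = 1)
    (ι : ∀ m : ℕ, TLA K q m →ₐ[K] TLA K q (m + 1))
    (hι : ∀ m : ℕ, ∀ i : Fin m, ι m (gA q m i) = gA q (m + 1) i.castSucc)
    (hτM : ∀ m : ℕ, ∀ h : TLA K q m,
      τ (m + 1) (ι m h * (sq • gA q (m + 1) (Fin.last m))) = τ m h)
    (hτM' : ∀ m : ℕ, ∀ h : TLA K q m,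
      τ (m + 1) (ι m h * (Ring.inverse sq • qinv q (gA q (m + 1) (Fin.last m)))) = τ m h) :
    IsAffineMarkovTrace q sq F (fun m => (τ m).comp (E m).toLinearMap) ∧
    IsDynkinInvariant ψ (fun m => (τ m).comp (E m).toLinearMap) := by
  have hEF : ∀ m h, E (m + 1) (F (m + 1) h) = ι m (E m h) := by
    rintro (_ | k) h
    · exact DFunLike.congr_fun (ATL.algHom_ext_one ((E 1).comp (F 1)) ((ι 0).comp (E 0))) h
    · exact isE.apply_F_eq_inclusion hq (hF _ (by omega)) (hE _ (by omega)) (hE _ (by omega))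
        (hι _) h
  have hEg : ∀ m, E (m + 1) (g q (m + 2) ⟨m, by omega⟩) = gA q (m + 1) (Fin.last m) :=
    fun m => (hE (m + 1) (by omega)).1 (Fin.last m)
  refine ⟨⟨fun m => (htr m).comp (E m), by simpa using hτ1, fun m h => ?_, fun m h => ?_⟩, ?_⟩
  · simp only [LinearMap.comp_apply, AlgHom.toLinearMap_apply, map_mul, map_smul, hEF, hEg, hτM]
  · simp only [LinearMap.comp_apply, AlgHom.toLinearMap_apply, map_mul, map_smul, map_qinv, hEF,
      hEg, hτM']
  · rintro (_ | k) x
    · exact congrArg (τ 0)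
        (DFunLike.congr_fun (ATL.algHom_ext_one ((E 0).comp (ψ 1).toAlgHom) (E 0)) x)
    · have hconj := (hE (k + 1) (by omega)).apply_dynkin_eq_conj hq (hψ (k + 2)) x
      simp only [LinearMap.comp_apply, AlgHom.toLinearMap_apply, hconj, (htr _).apply_units_conj]

open AffineTL in
/-- Corollary 5.2.5: the family `ρ_{n+1} := τ_{n+1} ∘ E_n` obtained from a
Jones–Markov trace on the tower `(TL_n(q))` is an affine Markov trace on the tower
`(TLhat_n(q))`, invariant under the Dynkin automorphisms. -/
theorem statement14 {K : Type*} [CommRing K] [IsDomain K] [CharZero K]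
    (q sq : K) (hsq : sq * sq = q) (hq : IsUnit q) (hq1 : IsUnit (q + 1)) (hqne : q ≠ 1)
    (F : ∀ m : ℕ, ATL K q m →ₐ[K] ATL K q (m + 1))
    (hF : ∀ m : ℕ, ∀ hm : 2 ≤ m, isF q m hm (F m))
    (E : ∀ m : ℕ, ATL K q (m + 1) →ₐ[K] TLA K q m)
    (hE : ∀ m : ℕ, ∀ hm : 1 ≤ m, isE q m hm (E m))
    (ψ : ∀ m : ℕ, ATL K q m ≃ₐ[K] ATL K q m)
    (hψ : ∀ m : ℕ, ∀ i : Fin m, (ψ m) (g q m i) = g q m (csucc i))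
    (τ : ∀ m : ℕ, TLA K q m →ₗ[K] K)
    (htr : ∀ m, IsTrace (τ m)) (hτ1 : τ 0 1 = 1)
    (ι : ∀ m : ℕ, TLA K q m →ₐ[K] TLA K q (m + 1))
    (hι : ∀ m : ℕ, ∀ i : Fin m, ι m (gA q m i) = gA q (m + 1) i.castSucc)
    (hτM : ∀ m : ℕ, ∀ h : TLA K q m,
      τ (m + 1) (ι m h * (sq • gA q (m + 1) (Fin.last m))) = τ m h)
    (hτM' : ∀ m : ℕ, ∀ h : TLA K q m,
      τ (m + 1) (ι m h * (Ring.inverse sq • qinv q (gA q (m + 1) (Fin.last m)))) = τ m h) :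
    IsAffineMarkovTrace q sq F (fun m => (τ m).comp (E m).toLinearMap) ∧
    IsDynkinInvariant ψ (fun m => (τ m).comp (E m).toLinearMap) :=
  statement14_general q sq hq F hF E hE ψ hψ τ htr hτ1 ι hι hτM hτM'
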